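/- Temperature monotonicity of the softmax maximizer: for logits s₁,…,s_K with a strict unique maximum at index c* and temperatures 0 < γ₁ < γ₂, the softmax probability of c* at temperature γ₁ is strictly greater than at temperature γ₂: exp(s_{c*}/γ₁)/∑ᵢ exp(sᵢ/γ₁) > exp(s_{c*}/γ₂)/∑ᵢ exp(sᵢ/γ₂). -/

import Mathlib

open Finset Real

lemma div_le_div_of_nonpos_left {x a b : ℝ} (hx : x ≤ 0) (ha : 0 < a) (hab : a ≤ b) :
    x / a ≤ x / b := by
  simpa only [div_eq_mul_inv] using
    mul_le_mul_of_nonpos_left ((inv_le_inv₀ (ha.trans_le hab) ha).2 hab) hx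

lemma div_lt_div_of_neg_left {x a b : ℝ} (hx : x < 0) (ha : 0 < a) (hab : a < b) :
    x / a < x / b := by
  simpa only [div_eq_mul_inv] using
    mul_lt_mul_of_neg_left ((inv_lt_inv₀ (ha.trans hab) ha).2 hab) hx

section Softmax

variable {ι : Type*} [Fintype ι] (s : ι → ℝ) (c : ι)

lemma exp_div_div_sum_exp_eq_inv_sum_exp_sub (γ : ℝ) :
    exp (s c / γ) / ∑ i, exp (s i / γ) = (∑ i, exp ((s i - s c) / γ))⁻¹ := by
  have hsum : ∑ i, exp (s i / γ) = exp (s c / γ) * ∑ i, exp ((s i - s c) / γ) := by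
    rw [mul_sum]
    refine sum_congr rfl fun _ _ => ?_
    rw [← exp_add, sub_div, add_sub_cancel]
  rw [hsum, div_mul_eq_div_div, div_self (exp_ne_zero _), one_div]

lemma sum_exp_sub_div_pos (γ : ℝ) : 0 < ∑ i, exp ((s i - s c) / γ) :=
  sum_pos (fun _ _ => exp_pos _) ⟨c, mem_univ c⟩

/-- Relative to a strict maximum every other logit is negative, so its weight grows with
the temperature. -/
lemma strictMonoOn_sum_exp_sub_div [Nontrivial ι] (hmax : ∀ i, i ≠ c → s i < s c) :
    StrictMonoOn (fun γ => ∑ i, exp ((s i - s c) / γ)) (Set.Ioi 0) := by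
  intro γ₁ hγ₁ γ₂ _ hγ
  obtain ⟨j, hj⟩ := exists_ne c
  have hle_max : ∀ i, s i ≤ s c := fun i =>
    (eq_or_ne i c).elim (fun h => h ▸ le_rfl) fun h => (hmax i h).le
  have hle : ∀ i, exp ((s i - s c) / γ₁) ≤ exp ((s i - s c) / γ₂) := fun i =>
    exp_le_exp.2 <| div_le_div_of_nonpos_left (sub_nonpos.2 (hle_max i)) hγ₁ hγ.le
  exact sum_lt_sum (fun i _ => hle i) ⟨j, mem_univ j,
    exp_lt_exp.2 <| div_lt_div_of_neg_left (sub_neg.2 <| hmax j hj) hγ₁ hγ⟩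

end Softmax

theorem stmt_7 {K : ℕ} (hK : 2 ≤ K) (s : Fin K → ℝ) (cstar : Fin K)
    (hmax : ∀ i : Fin K, i ≠ cstar → s i < s cstar)
    (γ₁ γ₂ : ℝ) (hγ₁ : 0 < γ₁) (hγ : γ₁ < γ₂) :
    Real.exp (s cstar / γ₁) / (∑ i, Real.exp (s i / γ₁))
      > Real.exp (s cstar / γ₂) / (∑ i, Real.exp (s i / γ₂)) := by
  have : Nontrivial (Fin K) := Fin.nontrivial_iff_two_le.2 hK
  rw [gt_iff_lt, exp_div_div_sum_exp_eq_inv_sum_exp_sub, exp_div_div_sum_exp_eq_inv_sum_exp_sub,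
    inv_lt_inv₀ (sum_exp_sub_div_pos s cstar γ₂) (sum_exp_sub_div_pos s cstar γ₁)]
  exact strictMonoOn_sum_exp_sub_div s cstar hmax hγ₁ (hγ₁.trans hγ) hγ
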